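/- Let p be a prime and G a finite group. Call a second maximal subgroup H of G 'strictly second maximal' if H is maximal in every maximal subgroup of G that contains H. Suppose that for every strictly second maximal subgroup H of G with p dividing |H|, every maximal subgroup of G containing H is solvable. Then every maximal subgroup of G is either p-solvable or minimal non-p-solvable. -/

import Mathlib

/-- A finite group is `p`-solvable if it has a normal series each of whose
factors is a `p`-group or a group of order coprime to `p`. -/
def IsPSolvable (p : ℕ) (G : Type*) [Group G] : Prop :=
  ∃ (n : ℕ) (s : Fin (n + 1) → Subgroup G),
    s 0 = ⊥ ∧ s (Fin.last n) = ⊤ ∧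
    ∀ i : Fin n,
      s i.castSucc ≤ s i.succ ∧
      ((s i.castSucc).subgroupOf (s i.succ)).Normal ∧
      ((∃ k : ℕ, Nat.card ((s i.succ) ⧸ (s i.castSucc).subgroupOf (s i.succ)) = p ^ k) ∨
        ¬ p ∣ Nat.card ((s i.succ) ⧸ (s i.castSucc).subgroupOf (s i.succ)))

/-- `H` is a second maximal subgroup of `G`: it is a maximal subgroup of some
maximal subgroup of `G`. -/
def IsSecondMaximal {G : Type*} [Group G] (H : Subgroup G) : Prop :=
  ∃ M : Subgroup G, IsCoatom M ∧ H ≤ M ∧ IsCoatom (H.subgroupOf M)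

/-- `H` is a strictly second maximal subgroup of `G`: it is a second maximal
subgroup that is maximal in every maximal subgroup of `G` containing it. -/
def IsStrictlySecondMaximal {G : Type*} [Group G] (H : Subgroup G) : Prop :=
  IsSecondMaximal H ∧ ∀ M : Subgroup G, IsCoatom M → H ≤ M → IsCoatom (H.subgroupOf M)

/-- A group is minimal non-`p`-solvable if it is not `p`-solvable but every
maximal subgroup is `p`-solvable. -/
def IsMinimalNonPSolvable (p : ℕ) (M : Type*) [Group M] : Prop :=
  ¬ IsPSolvable p M ∧ ∀ K : Subgroup M, IsCoatom K → IsPSolvable p K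

/-! A maximal subgroup `K` of a maximal subgroup `M` is second maximal in `G`. If `p ∤ |K|` it is
`p`-solvable outright. Otherwise `K` lies in a strictly second maximal subgroup `H` with `p ∣ |H|`:
a second maximal subgroup that is not strictly second maximal is properly contained in a maximal
subgroup of the maximal subgroup of `G` in which it fails to be maximal, and this climb stops since
`G` is finite. The maximal subgroups over `H` are solvable by hypothesis, so `K` is solvable, hence
`p`-solvable, because the factors of a composition series of a finite solvable group have prime
order. So a maximal subgroup of `G` that is not `p`-solvable is minimal non-`p`-solvable. -/

open Subgroup

namespace Subgroup

variable {G : Type*} [Group G]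

theorem isCoatom_subgroupOf_iff {H K : Subgroup G} (hHK : H ≤ K) :
    IsCoatom (H.subgroupOf K) ↔ H ⋖ K := by
  let e : Subgroup K ≃o Set.Iic K := MapSubtype.orderIso K
  rw [← e.isCoatom_iff, Set.Iic.isCoatom_iff]
  change (H.subgroupOf K).map K.subtype ⋖ K ↔ H ⋖ K
  rw [map_subgroupOf_eq_of_le hHK]

theorem normal_subgroupOf_map {G' : Type*} [Group G'] (f : G →* G') {H K : Subgroup G}
    (hHK : H ≤ K) (hn : (H.subgroupOf K).Normal) : ((H.map f).subgroupOf (K.map f)).Normal := by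
  rw [normal_subgroupOf_iff_le_normalizer (map_mono hHK)]
  exact (map_mono ((normal_subgroupOf_iff_le_normalizer hHK).mp hn)).trans (le_normalizer_map f)

end Subgroup

section SecondMaximal

variable {G : Type*} [Group G]

theorem isSecondMaximal_iff {H : Subgroup G} :
    IsSecondMaximal H ↔ ∃ M, IsCoatom M ∧ H ⋖ M := by
  refine exists_congr fun M => and_congr_right fun _ => ?_
  exact ⟨fun ⟨hHM, h⟩ => (isCoatom_subgroupOf_iff hHM).mp h,
    fun h => ⟨h.le, (isCoatom_subgroupOf_iff h.le).mpr h⟩⟩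

theorem isStrictlySecondMaximal_iff {H : Subgroup G} :
    IsStrictlySecondMaximal H ↔ IsSecondMaximal H ∧ ∀ M, IsCoatom M → H ≤ M → H ⋖ M := by
  refine and_congr_right fun _ => forall₂_congr fun M _ => ?_
  exact forall_congr' fun hHM => isCoatom_subgroupOf_iff hHM

theorem IsSecondMaximal.exists_gt [Finite G] {H : Subgroup G} (hH : IsSecondMaximal H)
    (hs : ¬ IsStrictlySecondMaximal H) : ∃ H', IsSecondMaximal H' ∧ H < H' := by
  simp only [isStrictlySecondMaximal_iff, hH, true_and, not_forall] at hs
  obtain ⟨M, hM, hHM, hnot⟩ := hs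
  obtain ⟨M₀, hM₀, hHM₀⟩ := isSecondMaximal_iff.mp hH
  have hHM' : H < M := hHM.lt_of_ne <| by
    rintro rfl
    exact hM₀.1 (hM.lt_iff.mp hHM₀.lt)
  obtain ⟨H', hHH', hH'M⟩ := exists_le_covBy_of_lt hHM'
  refine ⟨H', isSecondMaximal_iff.mpr ⟨M, hM, hH'M⟩, hHH'.lt_of_ne ?_⟩
  rintro rfl
  exact hnot hH'M

theorem IsSecondMaximal.isSolvable [Finite G] {p : ℕ}
    (h : ∀ H : Subgroup G, IsStrictlySecondMaximal H → p ∣ Nat.card H →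
      ∀ M : Subgroup G, IsCoatom M → H ≤ M → Group.IsSolvable M)
    {L : Subgroup G} (hL : IsSecondMaximal L) (hpL : p ∣ Nat.card L) : Group.IsSolvable L := by
  induction L using WellFoundedGT.induction with
  | ind L ih =>
    by_cases hs : IsStrictlySecondMaximal L
    · obtain ⟨M, hM, hLM, -⟩ := hL
      have := h L hs hpL M hM hLM
      exact Group.isSolvable_of_isSolvable_injective (inclusion_injective hLM)
    · obtain ⟨L', hL', hLL'⟩ := hL.exists_gt hs
      have := ih L' hLL' hL' (hpL.trans (card_dvd_of_le hLL'.le))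
      exact Group.isSolvable_of_isSolvable_injective (inclusion_injective hLL'.le)

theorem isSecondMaximal_map_subtype {M : Subgroup G} (hM : IsCoatom M) {K : Subgroup M}
    (hK : IsCoatom K) : IsSecondMaximal (K.map M.subtype) :=
  ⟨M, hM, map_subtype_le K,
    by rwa [← comap_subtype, comap_map_eq_self_of_injective M.subtype_injective]⟩

end SecondMaximal

section PSolvable

variable {p : ℕ}

theorem IsPSolvable.of_normal {K : Type*} [Group K] (N : Subgroup K) [N.Normal]
    (hN : IsPSolvable p N) (hKN : (∃ k, Nat.card (K ⧸ N) = p ^ k) ∨ ¬ p ∣ Nat.card (K ⧸ N)) :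
    IsPSolvable p K := by
  obtain ⟨n, s, h0, hlast, hstep⟩ := hN
  refine ⟨n + 1, Fin.snoc (fun i => (s i).map N.subtype) ⊤, ?_, Fin.snoc_last .., fun i => ?_⟩
  · rw [← Fin.castSucc_zero, Fin.snoc_castSucc, h0, Subgroup.map_bot]
  induction i using Fin.lastCases with
  | last =>
    rw [Fin.succ_last, Fin.snoc_last, Fin.snoc_castSucc, hlast, ← MonoidHom.range_eq_map,
      range_subtype, ← index_eq_card, ← relIndex, relIndex_top_right, index_eq_card]
    exact ⟨le_top, inferInstance, hKN⟩
  | cast j =>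
    obtain ⟨hle, hnormal, hfactor⟩ := hstep j
    rw [← index_eq_card, ← relIndex] at hfactor
    rw [Fin.succ_castSucc, Fin.snoc_castSucc, Fin.snoc_castSucc, ← index_eq_card, ← relIndex,
      relIndex_map_map_of_injective _ _ N.subtype_injective]
    exact ⟨map_mono hle, normal_subgroupOf_map _ hle hnormal, hfactor⟩

theorem isPSolvable_of_subsingleton (K : Type*) [Group K] [Subsingleton K] : IsPSolvable p K :=
  ⟨0, fun _ => ⊥, rfl, Subsingleton.elim _ _, Fin.elim0⟩

theorem isPSolvable_of_card (K : Type*) [Group K]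
    (hK : (∃ k, Nat.card K = p ^ k) ∨ ¬ p ∣ Nat.card K) : IsPSolvable p K := by
  refine (isPSolvable_of_subsingleton (⊥ : Subgroup K)).of_normal ⊥ ?_
  rwa [← index_eq_card, index_bot]

theorem exists_normal_isSimpleGroup_quotient (K : Type*) [Group K] [Finite K] [Nontrivial K] :
    ∃ (N : Subgroup K) (_ : N.Normal), IsSimpleGroup (K ⧸ N) := by
  obtain ⟨N, ⟨hN, hNtop⟩, hmax⟩ := (Set.toFinite {N : Subgroup K | N.Normal ∧ N ≠ ⊤}).exists_maximal
    ⟨⊥, inferInstance, bot_ne_top⟩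
  have hsurj := QuotientGroup.mk'_surjective N
  have := QuotientGroup.nontrivial_iff.mpr hNtop
  refine ⟨N, hN, ⟨fun H hH => ?_⟩⟩
  have hNH : N ≤ H.comap (QuotientGroup.mk' N) :=
    (QuotientGroup.ker_mk' N).ge.trans (MonoidHom.ker_le_comap _ _)
  by_cases htop : H.comap (QuotientGroup.mk' N) = ⊤
  · right
    rwa [← comap_top (QuotientGroup.mk' N), comap_injective hsurj |>.eq_iff] at htop
  · left
    rw [eq_bot_iff, ← map_comap_eq_self_of_surjective hsurj H, ← QuotientGroup.map_mk'_self N]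
    exact map_mono (hmax ⟨hH.comap _, htop⟩ hNH)

theorem IsSimpleGroup.prime_card_of_isSolvable (Q : Type*) [Group Q] [IsSimpleGroup Q]
    [Group.IsSolvable Q] : (Nat.card Q).Prime :=
  have : IsMulCommutative Q := ⟨⟨IsSimpleGroup.comm_iff_isSolvable.mpr inferInstance⟩⟩
  Group.is_simple_iff_prime_card.mp inferInstance

theorem isPSolvable_of_isSolvable (hp : p ≠ 1) (K : Type*) [Group K] [Finite K]
    [Group.IsSolvable K] : IsPSolvable p K := by
  induction hK : Nat.card K using Nat.strong_induction_on generalizing K with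
  | _ n ih =>
    cases subsingleton_or_nontrivial K
    · exact isPSolvable_of_subsingleton K
    obtain ⟨N, _, _⟩ := exists_normal_isSimpleGroup_quotient K
    have hNtop : N ≠ ⊤ := QuotientGroup.nontrivial_iff.mp inferInstance
    have hNK : Nat.card N < n :=
      hK ▸ N.card_le_card_group.lt_of_ne (mt (card_eq_iff_eq_top N).mp hNtop)
    refine IsPSolvable.of_normal N (ih _ hNK N rfl) ?_
    have hq := IsSimpleGroup.prime_card_of_isSolvable (K ⧸ N)
    by_cases hpq : p ∣ Nat.card (K ⧸ N)
    · exact Or.inl ⟨1, by rw [pow_one, (hq.eq_one_or_self_of_dvd p hpq).resolve_left hp]⟩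
    · exact Or.inr hpq

end PSolvable

theorem stmt_10 {G : Type*} [Group G] [Finite G] (p : ℕ) (hp : p.Prime)
    (h : ∀ H : Subgroup G, IsStrictlySecondMaximal H → p ∣ Nat.card H →
      ∀ M : Subgroup G, IsCoatom M → H ≤ M → IsSolvable M) :
    ∀ M : Subgroup G, IsCoatom M → IsPSolvable p M ∨ IsMinimalNonPSolvable p M := by
  intro M hM
  by_cases hMp : IsPSolvable p M
  · exact Or.inl hMp
  refine Or.inr ⟨hMp, fun K hK => ?_⟩
  by_cases hpK : p ∣ Nat.card K
  · have hKG := isSecondMaximal_map_subtype hM hK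
    have := hKG.isSolvable h (by rwa [card_map_of_injective M.subtype_injective])
    have : Group.IsSolvable K := Group.isSolvable_of_isSolvable_injective
      (f := (K.equivMapOfInjective _ M.subtype_injective).toMonoidHom) (MulEquiv.injective _)
    exact isPSolvable_of_isSolvable hp.ne_one K
  · exact isPSolvable_of_card K (Or.inr hpK)
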